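/- arXiv:1705.01064 — 5 statements merged into one kernel-verified Lean document; each statement's English description precedes it below -/
import Mathlib

section
/- Let X and Y be finite sets, let f(·|θ) be a family of strictly positive probability mass functions on X with θ ↦ f(x|θ) differentiable for every x, and let T : X → Y be a statistic. Let f_T(y|θ) = Σ_{x : T(x)=y} f(x|θ) be the induced probability mass function of T. Then the Fisher information cannot increase under the statistic: Σ_{y∈Y} (d/dθ log f_T(y|θ))² · f_T(y|θ) ≤ Σ_{x∈X} (d/dθ log f(x|θ))² · f(x|θ), where the sum over y is restricted to those y with f_T(y|θ) > 0. -/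
open scoped Classical

/-! Writing each Fisher summand as `(f')² / f`, the statement reduces fibre by fibre of `T` to
Sedrakyan's form of Cauchy–Schwarz, `(∑ fₓ')² / ∑ fₓ ≤ ∑ fₓ'² / fₓ`; summing over the fibres
(and dropping those of zero mass) gives the full-data information. -/

theorem sq_deriv_log_mul_of_hasDerivAt {g : ℝ → ℝ} {g' θ : ℝ} (hg : HasDerivAt g g' θ)
    (hθ : g θ ≠ 0) :
    deriv (fun t => Real.log (g t)) θ ^ 2 * g θ = g' ^ 2 / g θ := by
  rw [(hg.log hθ).deriv]
  field_simp

theorem sq_deriv_log_sum_mul_le {ι : Type*} (s : Finset ι) (f : ι → ℝ → ℝ) (θ : ℝ)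
    (hpos : ∀ i ∈ s, 0 < f i θ) (hdiff : ∀ i ∈ s, DifferentiableAt ℝ (f i) θ) :
    deriv (fun t => Real.log (∑ i ∈ s, f i t)) θ ^ 2 * ∑ i ∈ s, f i θ
      ≤ ∑ i ∈ s, deriv (f i) θ ^ 2 / f i θ := by
  rcases s.eq_empty_or_nonempty with rfl | hs
  · simp
  have hsum : HasDerivAt (fun t => ∑ i ∈ s, f i t) (∑ i ∈ s, deriv (f i) θ) θ :=
    HasDerivAt.fun_sum fun i hi => (hdiff i hi).hasDerivAt
  rw [sq_deriv_log_mul_of_hasDerivAt hsum (Finset.sum_pos hpos hs).ne']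
  exact Finset.sq_sum_div_le_sum_sq_div _ _ hpos

/-- Fisher information cannot increase under a statistic `T : X → Y`:
the Fisher information of the induced (pushforward) model
`f_T(y|θ) = ∑_{x : T x = y} f(x|θ)` (summing only over `y` with `f_T(y|θ) > 0`) is at most
the Fisher information of the full-data model. -/
theorem fisher_information_data_processing
    {X Y : Type*} [Fintype X] [Fintype Y]
    (a b : ℝ) (f : X → ℝ → ℝ) (T : X → Y)
    (hpos : ∀ x : X, ∀ θ ∈ Set.Ioo a b, 0 < f x θ)
    (hdiff : ∀ x : X, ∀ θ ∈ Set.Ioo a b, DifferentiableAt ℝ (f x) θ) :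
    ∀ θ ∈ Set.Ioo a b,
      ∑ y ∈ Finset.univ.filter
          (fun y : Y => 0 < ∑ x ∈ Finset.univ.filter (fun x : X => T x = y), f x θ),
        (deriv (fun t => Real.log
            (∑ x ∈ Finset.univ.filter (fun x : X => T x = y), f x t)) θ) ^ 2
          * ∑ x ∈ Finset.univ.filter (fun x : X => T x = y), f x θ
      ≤ ∑ x : X, (deriv (fun t => Real.log (f x t)) θ) ^ 2 * f x θ := by
  intro θ hθ
  have hterm_nonneg : ∀ x, 0 ≤ deriv (f x) θ ^ 2 / f x θ :=
    fun x => div_nonneg (sq_nonneg _) (hpos x θ hθ).le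
  calc _ ≤ ∑ y ∈ Finset.univ.filter
          (fun y : Y => 0 < ∑ x ∈ Finset.univ.filter (fun x : X => T x = y), f x θ),
        ∑ x ∈ Finset.univ.filter (fun x : X => T x = y), deriv (f x) θ ^ 2 / f x θ :=
        Finset.sum_le_sum fun y _ =>
          sq_deriv_log_sum_mul_le _ f θ (fun x _ => hpos x θ hθ) (fun x _ => hdiff x θ hθ)
    _ ≤ ∑ y : Y, ∑ x ∈ Finset.univ.filter (fun x : X => T x = y),
          deriv (f x) θ ^ 2 / f x θ :=
        Finset.sum_le_sum_of_subset_of_nonneg (Finset.filter_subset _ _)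
          fun y _ _ => Finset.sum_nonneg fun x _ => hterm_nonneg x
    _ = ∑ x : X, deriv (f x) θ ^ 2 / f x θ := Finset.sum_fiberwise _ T _
    _ = _ := Finset.sum_congr rfl fun x _ =>
        (sq_deriv_log_mul_of_hasDerivAt (hdiff x θ hθ).hasDerivAt (hpos x θ hθ).ne').symm
end

section
/- Let X and Y be finite sets, let f(·|θ) be a family of strictly positive probability mass functions on X with θ ↦ f(x|θ) differentiable for every x, and let T : X → Y be a statistic. Suppose T is sufficient in the factorization sense: there exist functions g : Y × Θ → ℝ and h : X → ℝ with f(x|θ) = g(T(x), θ) · h(x) for all x and θ. Then the Fisher information of T equals the Fisher information of the full data: Σ_{y∈Y, f_T(y|θ)>0} (d/dθ log f_T(y|θ))² · f_T(y|θ) = Σ_{x∈X} (d/dθ log f(x|θ))² · f(x|θ), where f_T(y|θ) = Σ_{x : T(x)=y} f(x|θ). -/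
/-!
Factorization makes `f(·|θ)` equal, near `θ`, to `g(y, ·)` times a nonzero constant on every
fiber `T⁻¹ y`, and likewise makes the fiber mass `f_T(y|·)` equal to `g(y, ·)` times
`∑_{T x = y} h x`. Logarithmic derivatives ignore nonzero constant factors, so all points of a
fiber and the fiber itself share the score `(log g(y, ·))'`; summing `score² · mass` over each
fiber then gives the same Fisher information.
-/

open Filter Topology

section LogDeriv

variable {𝕜 𝕜' : Type*} [NontriviallyNormedField 𝕜] [NontriviallyNormedField 𝕜']
  [NormedAlgebra 𝕜 𝕜']

theorem logDeriv_eq_of_eventuallyEq_mul_const {f g : 𝕜 → 𝕜'} {c : 𝕜'} {x : 𝕜} (hc : c ≠ 0)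
    (h : f =ᶠ[𝓝 x] fun t => g t * c) : logDeriv f x = logDeriv g x :=
  (logDeriv_congr_nhds h).eq_of_nhds.trans (logDeriv_mul_const x c hc)

theorem logDeriv_finset_sum_eq_of_eventually_eq_mul {ι : Type*} {s : Finset ι}
    {f : ι → 𝕜 → 𝕜'} {g : 𝕜 → 𝕜'} {c : ι → 𝕜'} {x : 𝕜}
    (hf : ∀ᶠ t in 𝓝 x, ∀ i ∈ s, f i t = g t * c i) (hc : ∑ i ∈ s, c i ≠ 0) :
    logDeriv (fun t => ∑ i ∈ s, f i t) x = logDeriv g x := by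
  refine logDeriv_eq_of_eventuallyEq_mul_const hc ?_
  filter_upwards [hf] with t ht
  rw [Finset.mul_sum]
  exact Finset.sum_congr rfl ht

end LogDeriv

theorem sq_deriv_log_sum_mul_sum_eq_of_eventually_eq_mul {ι : Type*} {s : Finset ι}
    {f : ι → ℝ → ℝ} {g : ℝ → ℝ} {c : ι → ℝ} {θ : ℝ}
    (hd : ∀ i ∈ s, DifferentiableAt ℝ (f i) θ) (hf₀ : ∀ i ∈ s, f i θ ≠ 0)
    (hs₀ : ∑ i ∈ s, f i θ ≠ 0) (hf : ∀ᶠ t in 𝓝 θ, ∀ i ∈ s, f i t = g t * c i) :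
    (deriv (fun t => Real.log (∑ i ∈ s, f i t)) θ) ^ 2 * ∑ i ∈ s, f i θ
      = ∑ i ∈ s, (deriv (fun t => Real.log (f i t)) θ) ^ 2 * f i θ := by
  have hfθ := hf.self_of_nhds
  have hc : ∑ i ∈ s, c i ≠ 0 := by
    refine right_ne_zero_of_mul (a := g θ) ?_
    rwa [Finset.mul_sum, ← Finset.sum_congr rfl hfθ]
  have hscore : ∀ i ∈ s, deriv (fun t => Real.log (f i t)) θ = logDeriv g θ := fun i hi =>
    (Real.deriv_log_comp_eq_logDeriv (hd i hi) (hf₀ i hi)).trans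
      (logDeriv_eq_of_eventuallyEq_mul_const (right_ne_zero_of_mul (hfθ i hi ▸ hf₀ i hi))
        (hf.mono fun t ht => ht i hi))
  have hsum_score : deriv (fun t => Real.log (∑ i ∈ s, f i t)) θ = logDeriv g θ :=
    (Real.deriv_log_comp_eq_logDeriv (.fun_sum hd) hs₀).trans
      (logDeriv_finset_sum_eq_of_eventually_eq_mul hf hc)
  rw [hsum_score, Finset.mul_sum]
  exact Finset.sum_congr rfl fun i hi => by rw [hscore i hi]

open scoped Classical in
/-- If the statistic `T : X → Y` is sufficient in the factorization sense,
i.e. `f(x|θ) = g(T x, θ) · h(x)` for all `x` and all `θ` in the parameter interval, then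
the Fisher information of the induced model `f_T(y|θ) = ∑_{x : T x = y} f(x|θ)` equals the
Fisher information of the full-data model. -/
theorem fisher_information_sufficient_statistic
    {X Y : Type*} [Fintype X] [Fintype Y]
    (a b : ℝ) (f : X → ℝ → ℝ) (T : X → Y) (g : Y → ℝ → ℝ) (h : X → ℝ)
    (hpos : ∀ x : X, ∀ θ ∈ Set.Ioo a b, 0 < f x θ)
    (hdiff : ∀ x : X, ∀ θ ∈ Set.Ioo a b, DifferentiableAt ℝ (f x) θ)
    (hfact : ∀ x : X, ∀ θ ∈ Set.Ioo a b, f x θ = g (T x) θ * h x) :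
    ∀ θ ∈ Set.Ioo a b,
      ∑ y ∈ Finset.univ.filter
          (fun y : Y => 0 < ∑ x ∈ Finset.univ.filter (fun x : X => T x = y), f x θ),
        (deriv (fun t => Real.log
            (∑ x ∈ Finset.univ.filter (fun x : X => T x = y), f x t)) θ) ^ 2
          * ∑ x ∈ Finset.univ.filter (fun x : X => T x = y), f x θ
      = ∑ x : X, (deriv (fun t => Real.log (f x t)) θ) ^ 2 * f x θ := by
  intro θ hθ
  have hfact_nhds : ∀ᶠ t in 𝓝 θ, ∀ x, f x t = g (T x) t * h x := by
    filter_upwards [Ioo_mem_nhds hθ.1 hθ.2] with t ht x using hfact x t ht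
  have hfiber (y : Y) (hy : 0 < ∑ x ∈ Finset.univ.filter (fun x : X => T x = y), f x θ) :=
    sq_deriv_log_sum_mul_sum_eq_of_eventually_eq_mul (fun x _ => hdiff x θ hθ)
      (fun x _ => (hpos x θ hθ).ne') hy.ne'
      (hfact_nhds.mono fun t ht x hx => by rw [ht x, (Finset.mem_filter.1 hx).2])
  refine (Finset.sum_congr rfl fun y hy => hfiber y (Finset.mem_filter.1 hy).2).trans ?_
  rw [Finset.sum_filter_of_ne]
  · exact Finset.sum_fiberwise Finset.univ T _
  · intro y _ hy
    obtain ⟨x, hx, -⟩ := Finset.exists_ne_zero_of_sum_ne_zero hy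
    exact Finset.sum_pos (fun x _ => hpos x θ hθ) ⟨x, hx⟩
end

section
/- (Cramér–Fréchet–Rao information lower bound, finite case.) Let X be a finite outcome space and let f(·|θ) be a family of strictly positive probability mass functions on X with Σ_{x∈X} f(x|θ) = 1 and θ ↦ f(x|θ) differentiable for every x, and suppose the Fisher information I(θ) = Σ_{x∈X} (d/dθ log f(x|θ))² f(x|θ) is strictly positive at θ. Let T : X → ℝ be an unbiased estimator of θ, i.e., Σ_{x∈X} T(x) f(x|θ) = θ for all θ in an open interval around the given θ. Then the variance of T is bounded below by the inverse Fisher information: Σ_{x∈X} (T(x) − θ)² f(x|θ) ≥ 1 / I(θ). -/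
/-- Cramér–Fréchet–Rao information lower bound, finite case. If `T : X → ℝ` is
an unbiased estimator of `θ` for a strictly positive, differentiable statistical model on a
finite outcome space with strictly positive Fisher information at `θ`, then the variance of
`T` at `θ` is at least the inverse Fisher information at `θ`. -/
theorem cramer_frechet_rao_lower_bound
    {X : Type*} [Fintype X] (a b : ℝ) (f : X → ℝ → ℝ) (T : X → ℝ) (θ : ℝ)
    (hθ : θ ∈ Set.Ioo a b)
    (hpos : ∀ x : X, ∀ t ∈ Set.Ioo a b, 0 < f x t)
    (hdiff : ∀ x : X, ∀ t ∈ Set.Ioo a b, DifferentiableAt ℝ (f x) t)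
    (hsum : ∀ t ∈ Set.Ioo a b, ∑ x : X, f x t = 1)
    (hI : 0 < ∑ x : X, (deriv (fun t => Real.log (f x t)) θ) ^ 2 * f x θ)
    (hunbiased : ∀ t ∈ Set.Ioo a b, ∑ x : X, T x * f x t = t) :
    ∑ x : X, (T x - θ) ^ 2 * f x θ
      ≥ 1 / (∑ x : X, (deriv (fun t => Real.log (f x t)) θ) ^ 2 * f x θ) := by
  have hnhds : Set.Ioo a b ∈ nhds θ := Ioo_mem_nhds hθ.1 hθ.2
  have hfpos : ∀ x : X, 0 < f x θ := fun x => hpos x θ hθ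
  have hfd : ∀ x : X, DifferentiableAt ℝ (f x) θ := fun x => hdiff x θ hθ
  -- derivative of the total mass is zero
  have hsum0 : ∑ x : X, deriv (f x) θ = 0 := by
    have h1 : deriv (fun t => ∑ x : X, f x t) θ = 0 := by
      have heq : (fun t => ∑ x : X, f x t) =ᶠ[nhds θ] fun _ => (1 : ℝ) :=
        Filter.eventuallyEq_of_mem hnhds hsum
      rw [heq.deriv_eq, deriv_const]
    rw [← h1, deriv_fun_sum (fun x _ => hfd x)]
  -- derivative of the unbiasedness identity
  have hsum1 : ∑ x : X, T x * deriv (f x) θ = 1 := by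
    have h1 : deriv (fun t => ∑ x : X, T x * f x t) θ = 1 := by
      have heq : (fun t => ∑ x : X, T x * f x t) =ᶠ[nhds θ] fun t => t :=
        Filter.eventuallyEq_of_mem hnhds hunbiased
      rw [heq.deriv_eq, deriv_id'']
    rw [← h1, deriv_fun_sum (fun x _ => (hfd x).const_mul (T x))]
    refine Finset.sum_congr rfl fun x _ => ?_
    rw [deriv_const_mul (T x) (hfd x)]
  -- log-derivative
  have hlog : ∀ x : X, deriv (fun t => Real.log (f x t)) θ = deriv (f x) θ / f x θ :=
    fun x => (((hfd x).hasDerivAt).log (hfpos x).ne').deriv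
  have hkey : ∑ x : X, (T x - θ) * deriv (f x) θ = 1 := by
    have : ∑ x : X, (T x - θ) * deriv (f x) θ
        = ∑ x : X, (T x * deriv (f x) θ - θ * deriv (f x) θ) := by
      refine Finset.sum_congr rfl fun x _ => by ring
    rw [this, Finset.sum_sub_distrib, hsum1, ← Finset.mul_sum, hsum0, mul_zero, sub_zero]
  -- Cauchy–Schwarz
  set u : X → ℝ := fun x => (T x - θ) * Real.sqrt (f x θ) with hu
  set v : X → ℝ := fun x => (deriv (f x) θ / f x θ) * Real.sqrt (f x θ) with hv
  have hsq : ∀ x : X, Real.sqrt (f x θ) * Real.sqrt (f x θ) = f x θ :=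
    fun x => Real.mul_self_sqrt (hfpos x).le
  have huv : ∑ x : X, u x * v x = 1 := by
    rw [← hkey]
    refine Finset.sum_congr rfl fun x _ => ?_
    have : u x * v x = (T x - θ) * (deriv (f x) θ / f x θ)
        * (Real.sqrt (f x θ) * Real.sqrt (f x θ)) := by ring
    rw [this, hsq x]
    rw [mul_assoc, div_mul_cancel₀ _ (hfpos x).ne']
  have hu2 : ∑ x : X, u x ^ 2 = ∑ x : X, (T x - θ) ^ 2 * f x θ := by
    refine Finset.sum_congr rfl fun x _ => ?_
    have : u x ^ 2 = (T x - θ) ^ 2 * (Real.sqrt (f x θ) * Real.sqrt (f x θ)) := by ring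
    rw [this, hsq x]
  have hv2 : ∑ x : X, v x ^ 2
      = ∑ x : X, (deriv (fun t => Real.log (f x t)) θ) ^ 2 * f x θ := by
    refine Finset.sum_congr rfl fun x _ => ?_
    have : v x ^ 2 = (deriv (f x) θ / f x θ) ^ 2
        * (Real.sqrt (f x θ) * Real.sqrt (f x θ)) := by ring
    rw [this, hsq x, hlog x]
  have hCS' : (∑ x : X, u x * v x) ^ 2 ≤ (∑ x : X, u x ^ 2) * (∑ x : X, v x ^ 2) :=
    Finset.sum_mul_sq_le_sq_mul_sq Finset.univ u v
  rw [huv, hu2, hv2, one_pow] at hCS'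
  rw [ge_iff_le, div_le_iff₀ hI]
  exact hCS'
end

section
/- The convolution of two Cauchy densities is again a Cauchy density with the location and scale parameters added: for all a, b ∈ ℝ, γ₁, γ₂ > 0 and all x ∈ ℝ, ∫_ℝ (γ₁/(π(γ₁²+(y−a)²))) · (γ₂/(π(γ₂²+(x−y−b)²))) dy = (γ₁+γ₂)/(π((γ₁+γ₂)²+(x−a−b)²)). In particular, the sample mean of n independent Cauchy(θ,1) random variables is again Cauchy(θ,1) distributed. -/
/-!
For `a ≠ b`, partial fractions give an explicit primitive of the product of the Cauchy densities
`p_{a,s} p_{b,t}`, made of `log ((y - a)² + s²) - log ((y - b)² + t²)`, which tends to `0` at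
infinity, and of the arctangents `arctan ((y - a) / s)` and `arctan ((y - b) / t)`. Its limits at
`±∞` give `∫ p_{a,s} p_{b,t} = p_{a,s+t}(b)`. The partial fractions break down at `a = b`, but
`b ↦ ∫ p_{a,s} p_{b,t}` is the convolution `p_{a,s} ⋆ p_{0,t}`, which is continuous, so the
identity extends to all `b`. Since `p_{b,t}(x - y) = p_{x-b,t}(y)`, this is the convolution formula.
-/

open Real Filter Topology Set MeasureTheory ProbabilityTheory
open scoped NNReal Convolution

lemma hasDerivAt_log_sq_add_sq (c : ℝ) {r : ℝ} (hr : r ≠ 0) (y : ℝ) :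
    HasDerivAt (fun y => log ((y - c) ^ 2 + r ^ 2)) (2 * (y - c) / ((y - c) ^ 2 + r ^ 2)) y := by
  refine ((((hasDerivAt_id' y).sub_const c).fun_pow 2).add_const (r ^ 2)).log
    (by positivity) |>.congr_deriv ?_
  ring

lemma hasDerivAt_arctan_div (c : ℝ) {r : ℝ} (hr : r ≠ 0) (y : ℝ) :
    HasDerivAt (fun y => arctan ((y - c) / r)) (r / ((y - c) ^ 2 + r ^ 2)) y := by
  refine (((hasDerivAt_id' y).sub_const c).div_const r).arctan.congr_deriv ?_
  field_simp
  ring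

lemma tendsto_log_sub_log_cobounded (a b : ℝ) {s t : ℝ} (hs : s ≠ 0) (ht : t ≠ 0) :
    Tendsto (fun y => log ((y - a) ^ 2 + s ^ 2) - log ((y - b) ^ 2 + t ^ 2))
      (Bornology.cobounded ℝ) (𝓝 0) := by
  set f := fun u : ℝ => log ((1 - a * u) ^ 2 + (s * u) ^ 2) - log ((1 - b * u) ^ 2 + (t * u) ^ 2)
  have hf : ContinuousAt f 0 := by fun_prop (disch := norm_num)
  have hf0 : f 0 = 0 := by norm_num [f]
  refine (hf0 ▸ hf.tendsto.comp tendsto_inv₀_cobounded).congr' ?_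
  filter_upwards [Bornology.eventually_ne_cobounded 0] with y hy
  have hy_sq (c r : ℝ) : (y - c) ^ 2 + r ^ 2 = y ^ 2 * ((1 - c * y⁻¹) ^ 2 + (r * y⁻¹) ^ 2) := by
    field_simp
  simp only [Function.comp, f]
  rw [hy_sq a, hy_sq b, log_mul (by positivity) (by positivity),
    log_mul (by positivity) (by positivity)]
  ring

lemma tendsto_arctan_div_atTop (c : ℝ) {r : ℝ} (hr : 0 < r) :
    Tendsto (fun y => arctan ((y - c) / r)) atTop (𝓝 (π / 2)) :=
  (tendsto_arctan_atTop.mono_right nhdsWithin_le_nhds).comp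
    ((tendsto_atTop_add_const_right _ (-c) tendsto_id).atTop_div_const hr)

lemma tendsto_arctan_div_atBot (c : ℝ) {r : ℝ} (hr : 0 < r) :
    Tendsto (fun y => arctan ((y - c) / r)) atBot (𝓝 (-(π / 2))) :=
  (tendsto_arctan_atBot.mono_right nhdsWithin_le_nhds).comp
    ((tendsto_atBot_add_const_right _ (-c) tendsto_id).atBot_div_const hr)

namespace ProbabilityTheory

lemma cauchyPDFReal_eq_div (x₀ : ℝ) (γ : ℝ≥0) (x : ℝ) :
    cauchyPDFReal x₀ γ x = γ / (π * (γ ^ 2 + (x - x₀) ^ 2)) := by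
  rw [cauchyPDFReal_def, div_eq_mul_inv, mul_inv, add_comm]
  ring

lemma norm_cauchyPDFReal_le (x₀ : ℝ) (γ : ℝ≥0) (x : ℝ) : ‖cauchyPDFReal x₀ γ x‖ ≤ π⁻¹ * γ⁻¹ := by
  rcases eq_or_ne γ 0 with rfl | hγ
  · simp
  rw [cauchyPDFReal_def, Real.norm_of_nonneg (by positivity), mul_assoc, NNReal.coe_inv]
  gcongr π⁻¹ * ?_
  rw [← div_eq_mul_inv, div_le_iff₀ (by positivity)]
  field_simp
  nlinarith [sq_nonneg (x - x₀)]

lemma continuous_cauchyPDFReal (x₀ : ℝ) (γ : ℝ≥0) : Continuous (cauchyPDFReal x₀ γ) := by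
  rcases eq_or_ne γ 0 with rfl | hγ
  · simpa only [cauchyPDFReal_scale_zero] using continuous_zero
  exact continuous_const.mul <| (by fun_prop : Continuous fun x => (x - x₀) ^ 2 + (γ : ℝ) ^ 2).inv₀
    fun x => by positivity

lemma cauchyPDFReal_sub (x₀ : ℝ) (γ : ℝ≥0) (x y : ℝ) :
    cauchyPDFReal x₀ γ (x - y) = cauchyPDFReal (x - x₀) γ y := by
  simp only [cauchyPDFReal_def]
  ring

lemma integrable_cauchyPDFReal_mul (a b : ℝ) (s t : ℝ≥0) :
    Integrable fun y => cauchyPDFReal a s y * cauchyPDFReal b t y :=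
  integrable_cauchyPDFReal a |>.mul_bdd (continuous_cauchyPDFReal b t).aestronglyMeasurable
    (ae_of_all _ (norm_cauchyPDFReal_le b t))

noncomputable def cauchyProdPrimitive (a b s t y : ℝ) : ℝ :=
  s * t / (π ^ 2 * (((b - a) ^ 2 + (s + t) ^ 2) * ((b - a) ^ 2 + (s - t) ^ 2))) *
    ((b - a) * (log ((y - a) ^ 2 + s ^ 2) - log ((y - b) ^ 2 + t ^ 2)) +
      ((b - a) ^ 2 + t ^ 2 - s ^ 2) / s * arctan ((y - a) / s) +
      ((b - a) ^ 2 + s ^ 2 - t ^ 2) / t * arctan ((y - b) / t))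

lemma hasDerivAt_cauchyProdPrimitive {a b : ℝ} (hab : a ≠ b) {s t : ℝ≥0} (hs : s ≠ 0)
    (ht : t ≠ 0) (y : ℝ) :
    HasDerivAt (cauchyProdPrimitive a b s t) (cauchyPDFReal a s y * cauchyPDFReal b t y) y := by
  have hs' : (s : ℝ) ≠ 0 := mod_cast hs
  have ht' : (t : ℝ) ≠ 0 := mod_cast ht
  have hba : b - a ≠ 0 := sub_ne_zero.mpr hab.symm
  have h := ((((hasDerivAt_log_sq_add_sq a hs' y).sub
    (hasDerivAt_log_sq_add_sq b ht' y)).const_mul (b - a)).add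
    ((hasDerivAt_arctan_div a hs' y).const_mul (((b - a) ^ 2 + t ^ 2 - s ^ 2) / s))).add
    ((hasDerivAt_arctan_div b ht' y).const_mul (((b - a) ^ 2 + s ^ 2 - t ^ 2) / t))
    |>.const_mul (s * t / (π ^ 2 * (((b - a) ^ 2 + (s + t) ^ 2) * ((b - a) ^ 2 + (s - t) ^ 2))))
  refine h.congr_deriv ?_
  simp only [cauchyPDFReal_def]
  field_simp
  ring

lemma tendsto_cauchyProdPrimitive (a b : ℝ) {s t : ℝ} (hs : s ≠ 0) (ht : t ≠ 0) {l : Filter ℝ}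
    (hl : l ≤ Bornology.cobounded ℝ) {θ : ℝ}
    (ha : Tendsto (fun y => arctan ((y - a) / s)) l (𝓝 θ))
    (hb : Tendsto (fun y => arctan ((y - b) / t)) l (𝓝 θ)) :
    Tendsto (cauchyProdPrimitive a b s t) l
      (𝓝 (s * t / (π ^ 2 * (((b - a) ^ 2 + (s + t) ^ 2) * ((b - a) ^ 2 + (s - t) ^ 2))) *
        (((b - a) ^ 2 + t ^ 2 - s ^ 2) / s + ((b - a) ^ 2 + s ^ 2 - t ^ 2) / t) * θ)) := by
  have h := ((((tendsto_log_sub_log_cobounded a b hs ht).mono_left hl).const_mul (b - a)).add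
    (ha.const_mul (((b - a) ^ 2 + t ^ 2 - s ^ 2) / s))).add
    (hb.const_mul (((b - a) ^ 2 + s ^ 2 - t ^ 2) / t))
    |>.const_mul (s * t / (π ^ 2 * (((b - a) ^ 2 + (s + t) ^ 2) * ((b - a) ^ 2 + (s - t) ^ 2))))
  unfold cauchyProdPrimitive
  convert h using 2
  ring

lemma integral_cauchyPDFReal_mul_of_ne {a b : ℝ} (hab : a ≠ b) {s t : ℝ≥0} (hs : s ≠ 0)
    (ht : t ≠ 0) :
    ∫ y, cauchyPDFReal a s y * cauchyPDFReal b t y = cauchyPDFReal a (s + t) b := by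
  have hs' : (0 : ℝ) < s := by positivity
  have ht' : (0 : ℝ) < t := by positivity
  rw [integral_of_hasDerivAt_of_tendsto (hasDerivAt_cauchyProdPrimitive hab hs ht)
    (integrable_cauchyPDFReal_mul a b s t)
    (tendsto_cauchyProdPrimitive a b hs'.ne' ht'.ne' IsOrderBornology.atBot_le_cobounded
      (tendsto_arctan_div_atBot a hs') (tendsto_arctan_div_atBot b ht'))
    (tendsto_cauchyProdPrimitive a b hs'.ne' ht'.ne' IsOrderBornology.atTop_le_cobounded
      (tendsto_arctan_div_atTop a hs') (tendsto_arctan_div_atTop b ht'))]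
  have hba : b - a ≠ 0 := sub_ne_zero.mpr hab.symm
  simp only [cauchyPDFReal_def, NNReal.coe_add]
  field_simp
  ring

lemma integral_cauchyPDFReal_mul (a b : ℝ) {s t : ℝ≥0} (hs : s ≠ 0) (ht : t ≠ 0) :
    ∫ y, cauchyPDFReal a s y * cauchyPDFReal b t y = cauchyPDFReal a (s + t) b := by
  have hconv (b : ℝ) :
      ∫ y, cauchyPDFReal a s y * cauchyPDFReal b t y =
        (cauchyPDFReal a s ⋆ cauchyPDFReal 0 t) b := by
    simp only [convolution_lsmul, smul_eq_mul, cauchyPDFReal_sub, sub_zero]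
  have hcont : Continuous (cauchyPDFReal a s ⋆ cauchyPDFReal 0 t) :=
    BddAbove.continuous_convolution_right_of_integrable (ContinuousLinearMap.lsmul ℝ ℝ)
      ⟨_, forall_mem_range.mpr (norm_cauchyPDFReal_le 0 t)⟩ (integrable_cauchyPDFReal a)
      (continuous_cauchyPDFReal 0 t)
  have h : cauchyPDFReal a s ⋆ cauchyPDFReal 0 t = cauchyPDFReal a (s + t) :=
    Continuous.ext_on (dense_compl_singleton a) hcont (continuous_cauchyPDFReal a (s + t))
      fun b hb => (hconv b).symm.trans (integral_cauchyPDFReal_mul_of_ne (Ne.symm hb) hs ht)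
  rw [hconv, h]

theorem cauchyPDFReal_convolution (a b : ℝ) {s t : ℝ≥0} (hs : s ≠ 0) (ht : t ≠ 0) :
    cauchyPDFReal a s ⋆ cauchyPDFReal b t = cauchyPDFReal (a + b) (s + t) := by
  ext x
  rw [convolution_lsmul]
  simp only [smul_eq_mul, cauchyPDFReal_sub]
  rw [integral_cauchyPDFReal_mul a _ hs ht]
  simp only [cauchyPDFReal_def]
  ring

end ProbabilityTheory

/-- The convolution of two Cauchy densities is again a Cauchy density whose
location and scale parameters are added: for all `a b : ℝ`, `γ₁ γ₂ > 0` and all `x : ℝ`,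
`∫ (γ₁/(π(γ₁²+(y−a)²))) · (γ₂/(π(γ₂²+(x−y−b)²))) dy
  = (γ₁+γ₂)/(π((γ₁+γ₂)²+(x−a−b)²))`.
(In particular, the sample mean of `n` independent `Cauchy(θ,1)` variables is again
`Cauchy(θ,1)` distributed.) -/
theorem cauchy_convolution (a b γ₁ γ₂ : ℝ) (h₁ : 0 < γ₁) (h₂ : 0 < γ₂) (x : ℝ) :
    (∫ y : ℝ, (γ₁ / (Real.pi * (γ₁ ^ 2 + (y - a) ^ 2)))
        * (γ₂ / (Real.pi * (γ₂ ^ 2 + (x - y - b) ^ 2))))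
      = (γ₁ + γ₂) / (Real.pi * ((γ₁ + γ₂) ^ 2 + (x - a - b) ^ 2)) := by
  lift γ₁ to ℝ≥0 using h₁.le
  lift γ₂ to ℝ≥0 using h₂.le
  rw [sub_sub, ← NNReal.coe_add, ← cauchyPDFReal_eq_div,
    ← cauchyPDFReal_convolution a b (NNReal.coe_pos.mp h₁).ne' (NNReal.coe_pos.mp h₂).ne',
    convolution_lsmul]
  simp only [← cauchyPDFReal_eq_div, smul_eq_mul]
end

section
/- (Kraft–McMillan inequality.) Let X be a finite alphabet with w elements, let D ≥ 2, and let C : X → List(Fin D) be a uniquely decipherable code, meaning that the extension of C to finite sequences by concatenation, (x₁,…,x_k) ↦ C(x₁) ++ ⋯ ++ C(x_k), is injective on the set of all finite sequences over X. Then the code lengths l(x) = length(C(x)) satisfy Σ_{x∈X} D^{−l(x)} ≤ 1. -/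
open Finset

private lemma kraft_card_bound {X : Type*} [Fintype X] {D : ℕ} (C : X → List (Fin D))
    (hud : Function.Injective fun s : List X => (s.map C).flatten) (k m : ℕ)
    [DecidableEq X] :
    (univ.filter (fun p : Fin k → X => ∑ i, (C (p i)).length = m)).card ≤ D ^ m := by
  classical
  have htarget : ((univ : Finset (List.Vector (Fin D) m)).image
      List.Vector.toList).card = D ^ m := by
    rw [Finset.card_image_of_injective _ (fun a b h => List.Vector.eq a b h),
      Finset.card_univ, card_vector, Fintype.card_fin]
  rw [← htarget]
  apply Finset.card_le_card_of_injOn (fun p => ((List.ofFn p).map C).flatten)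
  · intro p hp
    have hp' := (Finset.mem_filter.1 hp).2
    have hlen : (((List.ofFn p).map C).flatten).length = m := by
      rw [List.length_flatten, List.map_ofFn, List.map_ofFn]
      rw [List.sum_ofFn]
      simpa using hp'
    exact Finset.mem_image.2 ⟨⟨_, hlen⟩, Finset.mem_univ _, rfl⟩
  · intro p _ q _ h
    exact List.ofFn_injective (hud h)

/-- Kraft–McMillan inequality. Let `X` be a finite alphabet, `D ≥ 2`, and let
`C : X → List (Fin D)` be a uniquely decipherable code, i.e. the extension of `C` to finite
sequences over `X` by concatenation is injective. Then the code lengths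
`l(x) = (C x).length` satisfy `∑ x, D^(−l(x)) ≤ 1`. -/
theorem kraft_mcmillan_inequality
    {X : Type*} [Fintype X] (D : ℕ) (hD : 2 ≤ D) (C : X → List (Fin D))
    (hud : Function.Injective fun s : List X => (s.map C).flatten) :
    ∑ x : X, (D : ℝ) ^ (-((C x).length : ℤ)) ≤ 1 := by
  classical
  have hD0 : (0 : ℝ) < D := by
    have : (0 : ℕ) < D := by omega
    exact_mod_cast this
  set l : X → ℕ := fun x => (C x).length with hl
  set r : ℝ := (D : ℝ)⁻¹ with hr
  have hr0 : 0 ≤ r := by positivity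
  have hre : ∀ n : ℕ, (D : ℝ) ^ (-(n : ℤ)) = r ^ n := by
    intro n
    rw [zpow_neg, zpow_natCast, hr, inv_pow]
  set S : ℝ := ∑ x : X, r ^ l x with hS
  have hgoal : ∑ x : X, (D : ℝ) ^ (-((C x).length : ℤ)) = S := by
    rw [hS]; exact Finset.sum_congr rfl fun x _ => hre (l x)
  rw [hgoal]
  set L : ℕ := univ.sup l with hL
  -- Key inequality: S^k ≤ k*L + 1 for all k
  have key : ∀ k : ℕ, S ^ k ≤ (k : ℝ) * L + 1 := by
    intro k
    have hmaps : ∀ p ∈ (univ : Finset (Fin k → X)),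
        (∑ i, l (p i)) ∈ Finset.range (k * L + 1) := by
      intro p _
      rw [Finset.mem_range, Nat.lt_succ_iff]
      calc ∑ i, l (p i) ≤ ∑ _i : Fin k, L :=
            Finset.sum_le_sum fun i _ => Finset.le_sup (Finset.mem_univ (p i))
        _ = k * L := by rw [Finset.sum_const, Finset.card_univ, Fintype.card_fin, smul_eq_mul]
    have h1 : S ^ k = ∑ p : Fin k → X, r ^ (∑ i, l (p i)) := by
      calc S ^ k = ∏ _i : Fin k, S := by
            rw [Finset.prod_const, Finset.card_univ, Fintype.card_fin]
        _ = ∑ p ∈ Fintype.piFinset (fun _ : Fin k => (univ : Finset X)),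
              ∏ i, r ^ l (p i) := Finset.prod_univ_sum _ _
        _ = ∑ p : Fin k → X, r ^ (∑ i, l (p i)) := by
            rw [Fintype.piFinset_univ]
            exact Finset.sum_congr rfl fun p _ => Finset.prod_pow_eq_pow_sum _ _ _
    have h2 : ∑ p : Fin k → X, r ^ (∑ i, l (p i)) =
        ∑ m ∈ Finset.range (k * L + 1),
          ∑ p ∈ univ.filter (fun p : Fin k → X => ∑ i, l (p i) = m), r ^ (∑ i, l (p i)) :=
      (Finset.sum_fiberwise_of_maps_to hmaps _).symm
    rw [h1, h2]
    have hinner : ∀ m ∈ Finset.range (k * L + 1),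
        ∑ p ∈ univ.filter (fun p : Fin k → X => ∑ i, l (p i) = m), r ^ (∑ i, l (p i))
          ≤ 1 := by
      intro m _
      have heq : ∑ p ∈ univ.filter (fun p : Fin k → X => ∑ i, l (p i) = m),
          r ^ (∑ i, l (p i)) =
          ((univ.filter (fun p : Fin k → X => ∑ i, l (p i) = m)).card : ℝ) * r ^ m := by
        rw [Finset.sum_congr rfl (fun p hp => by rw [(Finset.mem_filter.1 hp).2]),
          Finset.sum_const, nsmul_eq_mul]
      rw [heq]
      have hcard := kraft_card_bound C hud k m
      calc ((univ.filter (fun p : Fin k → X => ∑ i, l (p i) = m)).card : ℝ) * r ^ m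
          ≤ ((D : ℝ) ^ m) * r ^ m := by
            apply mul_le_mul_of_nonneg_right _ (pow_nonneg hr0 m)
            exact_mod_cast hcard
        _ = 1 := by
            rw [hr, ← mul_pow, mul_inv_cancel₀ (ne_of_gt hD0), one_pow]
    calc ∑ m ∈ Finset.range (k * L + 1),
          ∑ p ∈ univ.filter (fun p : Fin k → X => ∑ i, l (p i) = m), r ^ (∑ i, l (p i))
        ≤ ∑ _m ∈ Finset.range (k * L + 1), (1 : ℝ) := Finset.sum_le_sum hinner
      _ = (k : ℝ) * L + 1 := by
          rw [Finset.sum_const, Finset.card_range, nsmul_eq_mul, mul_one]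
          push_cast; ring
  -- Conclude S ≤ 1
  by_contra hcon
  push_neg at hcon
  set ε : ℝ := S - 1 with hε
  have hε0 : 0 < ε := by simp [hε]; linarith
  obtain ⟨k, hk⟩ := exists_nat_gt ((2 * (L : ℝ) + 1) / ε ^ 2)
  have hkpos : (0 : ℝ) < k := by
    have : (0 : ℝ) ≤ (2 * (L : ℝ) + 1) / ε ^ 2 := by positivity
    linarith
  have hk1 : (1 : ℝ) ≤ k := by exact_mod_cast Nat.one_le_iff_ne_zero.2 (by
    intro h; rw [h] at hkpos; simp at hkpos)
  have hk' : 2 * (L : ℝ) + 1 < (k : ℝ) * ε ^ 2 := by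
    rw [div_lt_iff₀ (by positivity)] at hk
    linarith [hk]
  have hpow : 1 + (k : ℝ) * ε ≤ S ^ k := by
    have := one_add_mul_le_pow (a := ε) (by linarith) k
    have hSe : 1 + ε = S := by rw [hε]; ring
    rw [hSe] at this
    linarith [this]
  have hkey : ((k : ℝ) * ε) ^ 2 ≤ 2 * (k : ℝ) * L + 1 := by
    have h2k := key (k * 2)
    have hsq : S ^ (k * 2) = (S ^ k) ^ 2 := by rw [pow_mul]
    have hkε : (0 : ℝ) ≤ (k : ℝ) * ε := by positivity
    have hstep : ((k : ℝ) * ε) ^ 2 ≤ (S ^ k) ^ 2 := by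
      calc ((k : ℝ) * ε) ^ 2 ≤ (1 + (k : ℝ) * ε) ^ 2 := by nlinarith
        _ ≤ (S ^ k) ^ 2 := by nlinarith
    rw [← hsq] at hstep
    calc ((k : ℝ) * ε) ^ 2 ≤ S ^ (k * 2) := hstep
      _ ≤ ((k * 2 : ℕ) : ℝ) * L + 1 := key (k * 2)
      _ = 2 * (k : ℝ) * L + 1 := by push_cast; ring
  nlinarith [mul_lt_mul_of_pos_left hk' hkpos, hkey, hk1, sq_nonneg ((k:ℝ)*ε)]
end
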